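/- For m = 1, the m-Hermite polynomials satisfy the cubic recurrence x³ H_k^{(1)}(x) = ((k-1)/(k+2)) H_{k+3}^{(1)}(x) + 3(k-1) H_{k+1}^{(1)}(x) + 3k(k-1) H_{k-1}^{(1)}(x) + k(k-1)(k-2) H_{k-3}^{(1)}(x) for all k ≥ 3. -/

import Mathlib

/-!
From `He_{n+1} = X He_n - He_n'` one gets `He_n' = n He_{n-1}`, hence the three-term recurrence
`X He_n = He_{n+1} + n He_{n-1}` and the expansion
`H_n^{(1)} = X He_n' - He_n = (n - 1) He_n + n (n - 1) He_{n-2}`.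
Applying the three-term recurrence three times expands `X³ He_n` in `He_{n+3}, He_{n+1}, He_{n-1},
He_{n-3}`. Substituting these expansions, both sides of the cubic recurrence become combinations of
`He_{k+3}, He_{k+1}, …, He_{k-5}` with the same coefficients.
-/

open Polynomial

/-- The `m = 1` Hermite polynomial `H_n^{(1)} = W[x, H_n] = x H_n' - H_n`, where `H_n` is the
probabilist's Hermite polynomial. -/
noncomputable def mHermiteOne (n : ℕ) : Polynomial ℝ :=
  X * derivative ((hermite n).map (Int.castRingHom ℝ))
    - (hermite n).map (Int.castRingHom ℝ)

namespace Polynomial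

theorem derivative_hermite_succ (n : ℕ) :
    derivative (hermite (n + 1)) = ((n : ℤ[X]) + 1) * hermite n := by
  induction n with
  | zero => simp
  | succ n ih =>
    rw [hermite_succ (n + 1), derivative_sub, derivative_mul, derivative_X, ih, derivative_mul,
      hermite_succ n]
    simp only [derivative_add, derivative_natCast, derivative_one, Nat.cast_add, Nat.cast_one]
    ring

theorem X_mul_hermite_succ (n : ℕ) :
    X * hermite (n + 1) = hermite (n + 2) + ((n : ℤ[X]) + 1) * hermite n := by
  rw [hermite_succ (n + 1), derivative_hermite_succ]
  ring

/-- For `n < 2` the truncated index `n - 2` is harmless: its coefficient vanishes. -/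
theorem X_mul_derivative_hermite (n : ℕ) :
    X * derivative (hermite n)
      = (n : ℤ[X]) * hermite n + (n : ℤ[X]) * ((n : ℤ[X]) - 1) * hermite (n - 2) := by
  rcases n with _ | _ | n
  · simp
  · simp
  · rw [derivative_hermite_succ, mul_left_comm, X_mul_hermite_succ]
    simp only [Nat.reduceSubDiff]
    push_cast
    ring

theorem X_pow_three_mul_hermite_succ (n : ℕ) :
    X ^ 3 * hermite (n + 1) = hermite (n + 4) + 3 * ((n : ℤ[X]) + 2) * hermite (n + 2)
      + 3 * ((n : ℤ[X]) + 1) ^ 2 * hermite n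
      + ((n : ℤ[X]) + 1) * (n : ℤ[X]) * ((n : ℤ[X]) - 1) * hermite (n - 2) := by
  -- Lowering `X * hermite n` through `hermite_succ` and `X_mul_derivative_hermite` instead of the
  -- recurrence at `n - 1` avoids a case split on `n`.
  linear_combination (norm := (push_cast; ring_nf))
    X ^ 2 * X_mul_hermite_succ n + X * X_mul_hermite_succ (n + 1) + X_mul_hermite_succ (n + 2)
      + (2 * n + 3) * X_mul_hermite_succ n
      - (n + 1) * X * hermite_succ n + (n + 1) * X_mul_derivative_hermite n

theorem X_pow_three_mul_map_hermite_succ {R : Type*} [CommRing R] (n : ℕ) :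
    X ^ 3 * (hermite (n + 1)).map (Int.castRingHom R)
      = (hermite (n + 4)).map (Int.castRingHom R)
        + 3 * ((n : R[X]) + 2) * (hermite (n + 2)).map (Int.castRingHom R)
        + 3 * ((n : R[X]) + 1) ^ 2 * (hermite n).map (Int.castRingHom R)
        + ((n : R[X]) + 1) * (n : R[X]) * ((n : R[X]) - 1)
          * (hermite (n - 2)).map (Int.castRingHom R) := by
  simpa using congrArg (map (Int.castRingHom R)) (X_pow_three_mul_hermite_succ n)

end Polynomial

theorem mHermiteOne_eq (n : ℕ) :
    mHermiteOne n = ((n : ℝ[X]) - 1) * (hermite n).map (Int.castRingHom ℝ)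
      + (n : ℝ[X]) * ((n : ℝ[X]) - 1) * (hermite (n - 2)).map (Int.castRingHom ℝ) := by
  have h := congrArg (map (Int.castRingHom ℝ)) (X_mul_derivative_hermite n)
  simp only [Polynomial.map_mul, Polynomial.map_add, Polynomial.map_sub, map_X,
    Polynomial.map_natCast, Polynomial.map_one] at h
  rw [mHermiteOne, derivative_map, h]
  ring

/-- the cubic recurrence
`x³ H_k^{(1)} = ((k-1)/(k+2)) H_{k+3}^{(1)} + 3(k-1) H_{k+1}^{(1)} + 3k(k-1) H_{k-1}^{(1)}
+ k(k-1)(k-2) H_{k-3}^{(1)}` for all `k ≥ 3`. -/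
theorem mHermiteOne_cubic_recurrence (k : ℕ) (hk : 3 ≤ k) :
    X ^ 3 * mHermiteOne k
      = C (((k : ℝ) - 1) / ((k : ℝ) + 2)) * mHermiteOne (k + 3)
        + C (3 * ((k : ℝ) - 1)) * mHermiteOne (k + 1)
        + C (3 * (k : ℝ) * ((k : ℝ) - 1)) * mHermiteOne (k - 1)
        + C ((k : ℝ) * ((k : ℝ) - 1) * ((k : ℝ) - 2)) * mHermiteOne (k - 3) := by
  obtain ⟨n, rfl⟩ : ∃ n, k = n + 3 := ⟨k - 3, by omega⟩
  -- `H^{(1)}_{n+6}` carries the factor `n + 5`, which clears the denominator of its coefficient.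
  have hc : ((n : ℝ[X]) + 5) * C ((((n + 3 : ℕ) : ℝ) - 1) / (((n + 3 : ℕ) : ℝ) + 2)) = n + 2 := by
    have h : ((n : ℝ) + 5) * ((((n + 3 : ℕ) : ℝ) - 1) / (((n + 3 : ℕ) : ℝ) + 2)) = n + 2 := by
      push_cast
      field_simp
      ring
    simpa [C_ofNat] using congrArg C h
  generalize C ((((n + 3 : ℕ) : ℝ) - 1) / (((n + 3 : ℕ) : ℝ) + 2)) = c at hc
  simp only [mHermiteOne_eq, Nat.add_sub_cancel, Nat.reduceSubDiff, map_mul, map_sub,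
    map_natCast, map_ofNat, map_one]
  linear_combination (norm := (push_cast; ring_nf))
    ((n : ℝ[X]) + 2) * X_pow_three_mul_map_hermite_succ (R := ℝ) (n + 2)
      + ((n : ℝ[X]) + 3) * ((n : ℝ[X]) + 2) * X_pow_three_mul_map_hermite_succ (R := ℝ) n
      - ((hermite (n + 6)).map (Int.castRingHom ℝ)
          + ((n : ℝ[X]) + 6) * (hermite (n + 4)).map (Int.castRingHom ℝ)) * hc
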